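/- For the Lie algebra g₂ with [X,Y]=Z, the sectional curvature of the plane spanned by orthonormal vectors U = aX+bY+cZ+dW and V = a'X+b'Y+c'Z+d'W equals (1/4)((ac'−ca')² + (bc'−cb')²) − (3/4)(ab'−ba')², and the scalar curvature is the constant −1/2. -/
import Mathlib


open Real

abbrev V4 := Fin 4 → ℝ

/-- the inner product making the basis orthonormal -/
def ip (u v : V4) : ℝ := u 0 * v 0 + u 1 * v 1 + u 2 * v 2 + u 3 * v 3

def X : V4 := ![1, 0, 0, 0]
def Y : V4 := ![0, 1, 0, 0]
def Z : V4 := ![0, 0, 1, 0]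
def W : V4 := ![0, 0, 0, 1]

def e : Fin 4 → V4 := ![X, Y, Z, W]

def br (u v : V4) : V4 := (u 0 * v 1 - u 1 * v 0) • Z

theorem stmt5 (nabla : V4 → V4 → V4)
    (hK : ∀ u v w : V4, 2 * ip (nabla u v) w = ip (br u v) w - ip (br v w) u + ip (br w u) v)
    (R : V4 → V4 → V4 → V4)
    (hR : ∀ u v w : V4, R u v w = nabla u (nabla v w) - nabla v (nabla u w) - nabla (br u v) w)
    (a b c d a' b' c' d' : ℝ) (u v : V4)
    (hu : u = a • X + b • Y + c • Z + d • W)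
    (hv : v = a' • X + b' • Y + c' • Z + d' • W)
    (huu : ip u u = 1) (hvv : ip v v = 1) (huv : ip u v = 0) :
    ip (R v u u) v / (ip u u * ip v v - ip u v ^ 2) =
      (1/4) * ((a * c' - c * a') ^ 2 + (b * c' - c * b') ^ 2) -
        (3/4) * (a * b' - b * a') ^ 2 ∧
    (∑ j : Fin 4, ∑ k : Fin 4, if j ≠ k then ip (R (e k) (e j) (e j)) (e k) / (ip (e j) (e j) * ip (e k) (e k) - ip (e j) (e k) ^ 2) else 0) = -(1/2) := by
  have hN : ∀ u v : V4, nabla u v =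
      ![(u 2 * v 1 + u 1 * v 2) / 2, -((u 2 * v 0 + u 0 * v 2) / 2),
        (u 0 * v 1 - u 1 * v 0) / 2, 0] := by
    intro p q
    funext i
    fin_cases i
    · show nabla p q 0 = (p 2 * q 1 + p 1 * q 2) / 2
      have h := hK p q X
      simp only [ip, br, X, Z, Pi.smul_apply, smul_eq_mul, Matrix.cons_val_zero,
        Matrix.cons_val_one, Matrix.head_cons, Matrix.cons_val_two, Matrix.tail_cons,
        Matrix.cons_val_three] at h
      linarith
    · show nabla p q 1 = -((p 2 * q 0 + p 0 * q 2) / 2)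
      have h := hK p q Y
      simp only [ip, br, Y, Z, Pi.smul_apply, smul_eq_mul, Matrix.cons_val_zero,
        Matrix.cons_val_one, Matrix.head_cons, Matrix.cons_val_two, Matrix.tail_cons,
        Matrix.cons_val_three] at h
      linarith
    · show nabla p q 2 = (p 0 * q 1 - p 1 * q 0) / 2
      have h := hK p q Z
      simp only [ip, br, Z, Pi.smul_apply, smul_eq_mul, Matrix.cons_val_zero,
        Matrix.cons_val_one, Matrix.head_cons, Matrix.cons_val_two, Matrix.tail_cons,
        Matrix.cons_val_three] at h
      linarith
    · show nabla p q 3 = 0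
      have h := hK p q W
      simp only [ip, br, W, Z, Pi.smul_apply, smul_eq_mul, Matrix.cons_val_zero,
        Matrix.cons_val_one, Matrix.head_cons, Matrix.cons_val_two, Matrix.tail_cons,
        Matrix.cons_val_three] at h
      linarith
  constructor
  · rw [huu, hvv, huv]
    subst hu hv
    simp only [hR, hN, ip, br, X, Y, Z, W, Pi.smul_apply, Pi.add_apply, Pi.sub_apply,
      smul_eq_mul, Matrix.cons_val_zero, Matrix.cons_val_one, Matrix.head_cons,
      Matrix.cons_val_two, Matrix.tail_cons, Matrix.cons_val_three]
    norm_num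
    ring
  · simp only [Fin.sum_univ_four, e, hR, hN, ip, br, X, Y, Z, W, Pi.smul_apply,
      Pi.sub_apply, smul_eq_mul, Matrix.cons_val_zero, Matrix.cons_val_one,
      Matrix.head_cons, Matrix.cons_val_two, Matrix.tail_cons, Matrix.cons_val_three,
      ne_eq, Fin.ext_iff]
    norm_num
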